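/- arXiv:2211.13386 — 2 statements merged into one kernel-verified Lean document; each statement's English description precedes it below -/
import Mathlib

section
/- Let η > 0, κ ∈ ℝ^{n×n} with κ_ij > 0, r, c ∈ Δ^n, α, β ∈ ℝ^n, and U ∈ ℝ^{d×k} with U^TU = I_k. Then L_η((α,β,U),κ) ≥ −‖C‖_∞ − η ‖log κ‖_∞, where C_ij = ‖x_i − y_j‖², ‖C‖_∞ = max_{i,j}|C_ij|, and ‖log κ‖_∞ = max_{i,j}|log κ_ij|. -/
open scoped BigOperators
open Matrix

noncomputable section

namespace PRWPaper

/-- Squared Euclidean norm of a vector in `ℝ^d`. -/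
def sqnorm {d : ℕ} (v : Fin d → ℝ) : ℝ := ∑ l, (v l) ^ 2

/-- `‖Uᵀ w‖²  = ⟨w wᵀ, U Uᵀ⟩` for `U ∈ ℝ^{d×k}`, `w ∈ ℝ^d`. -/
def projSq {d k : ℕ} (U : Matrix (Fin d) (Fin k) ℝ) (w : Fin d → ℝ) : ℝ :=
  ∑ m, (∑ l, U l m * w l) ^ 2

/-- `C_ij = ‖x_i - y_j‖²`. -/
def costC {n d : ℕ} (x y : Fin n → Fin d → ℝ) (i j : Fin n) : ℝ :=
  sqnorm (fun l => x i l - y j l)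

/-- `[C(U)]_ij = ‖Uᵀ (x_i - y_j)‖² = ⟨M_ij, U Uᵀ⟩`. -/
def costCU {n d k : ℕ} (x y : Fin n → Fin d → ℝ) (U : Matrix (Fin d) (Fin k) ℝ)
    (i j : Fin n) : ℝ :=
  projSq U (fun l => x i l - y j l)

/-- `‖C‖_∞ = max_{i,j} |C_ij|`. -/
def CInf {n d : ℕ} (x y : Fin n → Fin d → ℝ) : ℝ :=
  ⨆ p : Fin n × Fin n, |costC x y p.1 p.2|

/-- `φ_ij(α, β, U) = α_i + β_j + ⟨M_ij, U Uᵀ⟩`. -/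
def phi {n d k : ℕ} (x y : Fin n → Fin d → ℝ) (α β : Fin n → ℝ)
    (U : Matrix (Fin d) (Fin k) ℝ) (i j : Fin n) : ℝ :=
  α i + β j + costCU x y U i j

/-- `min_{i,j} φ_ij(α, β, U)`. -/
def phiMin {n d k : ℕ} (x y : Fin n → Fin d → ℝ) (α β : Fin n → ℝ)
    (U : Matrix (Fin d) (Fin k) ℝ) : ℝ :=
  ⨅ p : Fin n × Fin n, phi x y α β U p.1 p.2

/-- Membership in the (relatively open) simplex `Δ^n`. -/
def inSimplex {n : ℕ} (r : Fin n → ℝ) : Prop :=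
  (∑ i, r i) = 1 ∧ ∀ i, 0 < r i

/-- Membership in the transportation polytope `Π(r, c)`. -/
def inPlans {n : ℕ} (r c : Fin n → ℝ) (π : Matrix (Fin n) (Fin n) ℝ) : Prop :=
  (∀ i, ∑ j, π i j = r i) ∧ (∀ j, ∑ i, π i j = c j) ∧ ∀ i j, 0 ≤ π i j

/-- `ℓ₁` norm of a matrix. -/
def l1norm {n : ℕ} (A : Matrix (Fin n) (Fin n) ℝ) : ℝ := ∑ i, ∑ j, |A i j|

/-- `ζ_η(x, κ)_ij = κ_ij exp(-φ_ij(x)/η)`. -/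
def zeta {n d k : ℕ} (η : ℝ) (κ : Matrix (Fin n) (Fin n) ℝ) (x y : Fin n → Fin d → ℝ)
    (α β : Fin n → ℝ) (U : Matrix (Fin d) (Fin k) ℝ) : Matrix (Fin n) (Fin n) ℝ :=
  fun i j => κ i j * Real.exp (-(phi x y α β U i j) / η)

/-- `L_η((α,β,U), κ) = rᵀα + cᵀβ + η log ‖ζ_η((α,β,U),κ)‖₁`. -/
def Lfun {n d k : ℕ} (η : ℝ) (κ : Matrix (Fin n) (Fin n) ℝ) (r c : Fin n → ℝ)
    (x y : Fin n → Fin d → ℝ) (α β : Fin n → ℝ) (U : Matrix (Fin d) (Fin k) ℝ) : ℝ :=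
  (∑ i, r i * α i) + (∑ j, c j * β j) + η * Real.log (l1norm (zeta η κ x y α β U))

/-- `π_η(x, κ) = ζ_η(x,κ)/‖ζ_η(x,κ)‖₁`. -/
def piEta {n d k : ℕ} (η : ℝ) (κ : Matrix (Fin n) (Fin n) ℝ) (x y : Fin n → Fin d → ℝ)
    (α β : Fin n → ℝ) (U : Matrix (Fin d) (Fin k) ℝ) : Matrix (Fin n) (Fin n) ℝ :=
  fun i j => zeta η κ x y α β U i j / l1norm (zeta η κ x y α β U)

/-- Entropy `H(π) = -Σ_ij π_ij log π_ij` (with the convention `0 log 0 = 0`,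
which holds since `Real.log 0 = 0`). -/
def entropy {n : ℕ} (π : Matrix (Fin n) (Fin n) ℝ) : ℝ :=
  -∑ i, ∑ j, π i j * Real.log (π i j)

/-- `h(π, U) = ⟨C(U) - η log κ, π⟩ - η H(π)`. -/
def hObj {n d k : ℕ} (η : ℝ) (κ : Matrix (Fin n) (Fin n) ℝ) (x y : Fin n → Fin d → ℝ)
    (U : Matrix (Fin d) (Fin k) ℝ) (π : Matrix (Fin n) (Fin n) ℝ) : ℝ :=
  (∑ i, ∑ j, (costCU x y U i j - η * Real.log (κ i j)) * π i j) - η * entropy π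

/-- `‖π 1 - r‖₁`, the row-sum feasibility residual. -/
def rowRes {n : ℕ} (r : Fin n → ℝ) (π : Matrix (Fin n) (Fin n) ℝ) : ℝ :=
  ∑ i, |(∑ j, π i j) - r i|

/-- `‖πᵀ 1 - c‖₁`, the column-sum feasibility residual. -/
def colRes {n : ℕ} (c : Fin n → ℝ) (π : Matrix (Fin n) (Fin n) ℝ) : ℝ :=
  ∑ j, |(∑ i, π i j) - c j|

/-- Variation seminorm `‖v‖_var = max_i v_i - min_i v_i` of a vector. -/
def varVec {n : ℕ} (v : Fin n → ℝ) : ℝ := (⨆ i, v i) - (⨅ i, v i)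

/-- `‖log κ‖_var = max_{ij} log κ_ij - min_{ij} log κ_ij`. -/
def varLog {n : ℕ} (κ : Matrix (Fin n) (Fin n) ℝ) : ℝ :=
  (⨆ p : Fin n × Fin n, Real.log (κ p.1 p.2)) - (⨅ p : Fin n × Fin n, Real.log (κ p.1 p.2))

/-- `‖log κ‖_∞ = max_{ij} |log κ_ij|`. -/
def logInf {n : ℕ} (κ : Matrix (Fin n) (Fin n) ℝ) : ℝ :=
  ⨆ p : Fin n × Fin n, |Real.log (κ p.1 p.2)|

/-- Frobenius norm of a matrix. -/
def frobNorm {d k : ℕ} (A : Matrix (Fin d) (Fin k) ℝ) : ℝ :=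
  Real.sqrt (∑ l, ∑ m, (A l m) ^ 2)

/-- `V_π = Σ_ij π_ij M_ij` with `M_ij = (x_i - y_j)(x_i - y_j)ᵀ`. -/
def Vmat {n d : ℕ} (x y : Fin n → Fin d → ℝ) (π : Matrix (Fin n) (Fin n) ℝ) :
    Matrix (Fin d) (Fin d) ℝ :=
  fun l l' => ∑ i, ∑ j, π i j * ((x i l - y j l) * (x i l' - y j l'))

/-- Projection onto the tangent space of the Stiefel manifold at `U`:
`Proj_{T_U S}(A) = A - U (UᵀA + AᵀU)/2`. -/
def projTan {d k : ℕ} (U A : Matrix (Fin d) (Fin k) ℝ) : Matrix (Fin d) (Fin k) ℝ :=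
  A - (1 / 2 : ℝ) • (U * (Uᵀ * A + Aᵀ * U))

/-- Transport plan `(u_i A_ij v_j)_{ij}` normalized to total mass one. -/
def sinkMat {n : ℕ} (A : Matrix (Fin n) (Fin n) ℝ) (u v : Fin n → ℝ) :
    Matrix (Fin n) (Fin n) ℝ :=
  fun i j => u i * A i j * v j / (∑ i', ∑ j', u i' * A i' j' * v j')

/-!
Take `i₀, j₀` minimizing `α` and `β`. As `r` and `c` are probability vectors,
`rᵀα + cᵀβ ≥ α_{i₀} + β_{j₀}`; as the `ℓ₁` norm of the positive matrix `ζ` dominates its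
`(i₀, j₀)` entry, `η log ‖ζ‖₁ ≥ η log κ_{i₀j₀} - φ_{i₀j₀}`. The dual variables cancel, leaving
`η log κ_{i₀j₀} - ‖Uᵀ(x_{i₀} - y_{j₀})‖²`, and projecting onto the orthonormal columns of `U`
does not increase the norm.
-/

lemma projSq_eq_dotProduct {d k : ℕ} (U : Matrix (Fin d) (Fin k) ℝ) (w : Fin d → ℝ) :
    projSq U w = (Uᵀ *ᵥ w) ⬝ᵥ (Uᵀ *ᵥ w) := by
  simp [projSq, dotProduct, mulVec, sq]

lemma sqnorm_eq_dotProduct {d : ℕ} (w : Fin d → ℝ) : sqnorm w = w ⬝ᵥ w := by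
  simp [sqnorm, dotProduct, sq]

/-- The gap `‖w‖² - ‖Uᵀ w‖²` is the squared norm of the residual `w - U Uᵀ w`. -/
lemma projSq_le_sqnorm {d k : ℕ} {U : Matrix (Fin d) (Fin k) ℝ} (hU : Uᵀ * U = 1)
    (w : Fin d → ℝ) : projSq U w ≤ sqnorm w := by
  set v := Uᵀ *ᵥ w
  have hwv : w ⬝ᵥ (U *ᵥ v) = v ⬝ᵥ v := by
    rw [dotProduct_mulVec, ← mulVec_transpose]
  have hvv : (U *ᵥ v) ⬝ᵥ (U *ᵥ v) = v ⬝ᵥ v := by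
    rw [dotProduct_mulVec, ← mulVec_transpose, mulVec_mulVec, hU, one_mulVec, dotProduct_comm]
  have hres : (w - U *ᵥ v) ⬝ᵥ (w - U *ᵥ v) = w ⬝ᵥ w - v ⬝ᵥ v := by
    rw [sub_dotProduct, dotProduct_sub, dotProduct_sub, dotProduct_comm (U *ᵥ v) w, hwv, hvv]
    ring
  have hnonneg : 0 ≤ (w - U *ᵥ v) ⬝ᵥ (w - U *ᵥ v) :=
    Finset.sum_nonneg fun l _ => mul_self_nonneg _
  rw [projSq_eq_dotProduct, sqnorm_eq_dotProduct]
  linarith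

lemma costCU_le_CInf {n d k : ℕ} (x y : Fin n → Fin d → ℝ) {U : Matrix (Fin d) (Fin k) ℝ}
    (hU : Uᵀ * U = 1) (i j : Fin n) : costCU x y U i j ≤ CInf x y :=
  calc costCU x y U i j ≤ costC x y i j := projSq_le_sqnorm hU _
    _ ≤ |costC x y i j| := le_abs_self _
    _ ≤ CInf x y :=
      le_ciSup (f := fun p : Fin n × Fin n => |costC x y p.1 p.2|) (Set.finite_range _).bddAbove
        (i, j)

lemma neg_log_le_logInf {n : ℕ} (κ : Matrix (Fin n) (Fin n) ℝ) (i j : Fin n) :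
    -Real.log (κ i j) ≤ logInf κ :=
  (neg_le_abs _).trans <|
    le_ciSup (f := fun p : Fin n × Fin n => |Real.log (κ p.1 p.2)|) (Set.finite_range _).bddAbove
      (i, j)

lemma inSimplex.le_sum_mul {n : ℕ} {r : Fin n → ℝ} (hr : inSimplex r) {a : ℝ}
    {α : Fin n → ℝ} (ha : ∀ i, a ≤ α i) : a ≤ ∑ i, r i * α i :=
  calc a = ∑ i, r i * a := by rw [← Finset.sum_mul, hr.1, one_mul]
    _ ≤ ∑ i, r i * α i := Finset.sum_le_sum fun i _ => mul_le_mul_of_nonneg_left (ha i) (hr.2 i).le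

lemma abs_le_l1norm {n : ℕ} (A : Matrix (Fin n) (Fin n) ℝ) (i j : Fin n) :
    |A i j| ≤ l1norm A :=
  calc |A i j| ≤ ∑ j', |A i j'| :=
        Finset.single_le_sum (fun j' _ => abs_nonneg (A i j')) (Finset.mem_univ j)
    _ ≤ l1norm A :=
        Finset.single_le_sum (fun i' _ => Finset.sum_nonneg fun j' _ => abs_nonneg (A i' j'))
          (Finset.mem_univ i)

lemma log_le_log_l1norm {n : ℕ} {A : Matrix (Fin n) (Fin n) ℝ} {i j : Fin n}
    (hA : 0 < A i j) : Real.log (A i j) ≤ Real.log (l1norm A) :=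
  Real.log_le_log hA ((le_abs_self _).trans (abs_le_l1norm A i j))

lemma zeta_pos {n d k : ℕ} {η : ℝ} {κ : Matrix (Fin n) (Fin n) ℝ} (x y : Fin n → Fin d → ℝ)
    (α β : Fin n → ℝ) (U : Matrix (Fin d) (Fin k) ℝ) {i j : Fin n} (hκ : 0 < κ i j) :
    0 < zeta η κ x y α β U i j :=
  mul_pos hκ (Real.exp_pos _)

lemma mul_log_zeta {n d k : ℕ} {η : ℝ} {κ : Matrix (Fin n) (Fin n) ℝ}
    (x y : Fin n → Fin d → ℝ) (α β : Fin n → ℝ) (U : Matrix (Fin d) (Fin k) ℝ) {i j : Fin n}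
    (hη : η ≠ 0) (hκ : 0 < κ i j) :
    η * Real.log (zeta η κ x y α β U i j) = η * Real.log (κ i j) - phi x y α β U i j := by
  rw [zeta, Real.log_mul hκ.ne' (Real.exp_pos _).ne', Real.log_exp]
  field_simp
  ring

/-- lower bound `L_η((α,β,U),κ) ≥ -‖C‖_∞ - η ‖log κ‖_∞`. -/
theorem statement4 (n d k : ℕ) (hn : 1 ≤ n) (η : ℝ) (hη : 0 < η)
    (κ : Matrix (Fin n) (Fin n) ℝ) (hκ : ∀ i j, 0 < κ i j)
    (r c : Fin n → ℝ) (hr : inSimplex r) (hc : inSimplex c)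
    (x y : Fin n → Fin d → ℝ) (α β : Fin n → ℝ)
    (U : Matrix (Fin d) (Fin k) ℝ) (hU : Uᵀ * U = 1) :
    Lfun η κ r c x y α β U ≥ -(CInf x y) - η * logInf κ := by
  have : Nonempty (Fin n) := ⟨⟨0, hn⟩⟩
  obtain ⟨i₀, hi₀⟩ := Finite.exists_min α
  obtain ⟨j₀, hj₀⟩ := Finite.exists_min β
  have hα := hr.le_sum_mul hi₀
  have hβ := hc.le_sum_mul hj₀
  have hζ : η * Real.log (zeta η κ x y α β U i₀ j₀)
      ≤ η * Real.log (l1norm (zeta η κ x y α β U)) :=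
    mul_le_mul_of_nonneg_left (log_le_log_l1norm (zeta_pos x y α β U (hκ i₀ j₀))) hη.le
  have hκ₀ : η * -logInf κ ≤ η * Real.log (κ i₀ j₀) :=
    mul_le_mul_of_nonneg_left (neg_le.mp (neg_log_le_logInf κ i₀ j₀)) hη.le
  rw [mul_log_zeta x y α β U hη.ne' (hκ i₀ j₀), phi] at hζ
  have hC := costCU_le_CInf x y hU i₀ j₀
  rw [Lfun]
  linarith

end PRWPaper
end
end

section
/- Let η > 0, κ ∈ ℝ^{n×n} with κ_ij > 0, r, c ∈ Δ^n, ε_1 ≥ 0, ε_2 ≥ 0. Let x̃ = (α̃, β̃, Ũ) with Ũ ∈ ℝ^{d×k}, Ũ^TŨ = I_k, and suppose ‖Proj_{T_Ũ S}(−2 V_{π_η(x̃,κ)} Ũ)‖_F ≤ ε_1. Then for every π̂ ∈ Π(r,c) with ‖π̂ − π_η(x̃,κ)‖₁ ≤ ε_2, it holds that ‖Proj_{T_Ũ S}(−2 V_{π̂} Ũ)‖_F ≤ ε_1 + 2‖C‖_∞ ε_2. -/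
open scoped BigOperators
open Matrix

noncomputable section

namespace PRWPaper

/-! The map `π ↦ Proj_{T_U S}(-2 V_π U)` is linear in `π`, so it suffices to bound it on
`π̂ - π_η`. When `UᵀU = I`, neither the tangent projection nor right multiplication by `U`
increases the Frobenius norm (each is Pythagoras for an orthogonal splitting), and
`‖M_ij‖_F = ‖x_i - y_j‖² = C_ij`, so `‖V_D‖_F ≤ ‖C‖_∞ ‖D‖₁`. -/

section FrobeniusNorm

attribute [local instance] Matrix.frobeniusNormedAddCommGroup Matrix.frobeniusNormedSpace

variable {m n p : Type*} [Fintype m] [Fintype n] [Fintype p]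

theorem frobenius_norm_sq_eq_sum (A : Matrix m n ℝ) : ‖A‖ ^ 2 = ∑ i, ∑ j, A i j ^ 2 := by
  rw [frobenius_norm_def, ← Real.rpow_natCast, ← Real.rpow_mul (by positivity)]
  norm_num [Real.rpow_two]

theorem frobenius_norm_sq_eq_trace (A : Matrix m n ℝ) : ‖A‖ ^ 2 = trace (Aᵀ * A) := by
  rw [frobenius_norm_sq_eq_sum, Finset.sum_comm]
  simp only [trace, diag, mul_apply, transpose_apply, sq]

theorem frobNorm_eq_norm {d k : ℕ} (A : Matrix (Fin d) (Fin k) ℝ) : frobNorm A = ‖A‖ := by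
  rw [frobNorm, ← frobenius_norm_sq_eq_sum, Real.sqrt_sq (norm_nonneg A)]

theorem norm_sq_eq_norm_transpose_mul_sq_add [DecidableEq m] [DecidableEq n]
    {U : Matrix m n ℝ} (hU : Uᵀ * U = 1) (W : Matrix m p ℝ) :
    ‖W‖ ^ 2 = ‖Uᵀ * W‖ ^ 2 + ‖(1 - U * Uᵀ) * W‖ ^ 2 := by
  set Q := U * Uᵀ
  have hQQ : Q * Q = Q := by rw [Matrix.mul_assoc, ← Matrix.mul_assoc Uᵀ, hU, Matrix.one_mul]
  have hQ : (1 - Q)ᵀ * (1 - Q) = 1 - Q := by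
    simp [Q, transpose_sub, transpose_mul, sub_mul, mul_sub, hQQ]
  rw [frobenius_norm_sq_eq_trace, frobenius_norm_sq_eq_trace, frobenius_norm_sq_eq_trace,
    transpose_mul, transpose_mul, transpose_transpose, Matrix.mul_assoc Wᵀ (1 - Q)ᵀ,
    ← Matrix.mul_assoc (1 - Q)ᵀ, hQ]
  rw [Matrix.sub_mul, Matrix.one_mul, Matrix.mul_sub, trace_sub]
  simp only [Q, Matrix.mul_assoc]
  ring

theorem norm_transpose_mul_le [DecidableEq m] [DecidableEq n] {U : Matrix m n ℝ}
    (hU : Uᵀ * U = 1) (W : Matrix m p ℝ) : ‖Uᵀ * W‖ ≤ ‖W‖ := by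
  refine le_of_pow_le_pow_left₀ two_ne_zero (norm_nonneg W) ?_
  rw [norm_sq_eq_norm_transpose_mul_sq_add hU W]
  exact le_add_of_nonneg_right (sq_nonneg _)

theorem norm_mul_le_of_transpose_mul_self [DecidableEq m] [DecidableEq n] {U : Matrix m n ℝ}
    (hU : Uᵀ * U = 1) (B : Matrix p m ℝ) : ‖B * U‖ ≤ ‖B‖ := by
  rw [← frobenius_norm_transpose, transpose_mul, ← frobenius_norm_transpose B]
  exact norm_transpose_mul_le hU Bᵀ

theorem norm_vecMulVec_self (w : n → ℝ) : ‖vecMulVec w w‖ = ∑ i, w i ^ 2 := by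
  rw [← pow_left_inj₀ (norm_nonneg _) (by positivity) two_ne_zero]
  simp only [frobenius_norm_sq_eq_sum, vecMulVec_apply, mul_pow, sq (∑ i, w i ^ 2),
    Finset.sum_mul_sum]

theorem norm_sq_projTan_add {d k : ℕ} {U : Matrix (Fin d) (Fin k) ℝ} (hU : Uᵀ * U = 1)
    (A : Matrix (Fin d) (Fin k) ℝ) :
    ‖projTan U A‖ ^ 2 + ‖(1 / 2 : ℝ) • (Uᵀ * A + Aᵀ * U)‖ ^ 2 = ‖A‖ ^ 2 := by
  set B := Uᵀ * A
  have hBt : Aᵀ * U = Bᵀ := by rw [transpose_mul, transpose_transpose]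
  set S : Matrix (Fin k) (Fin k) ℝ := (1 / 2 : ℝ) • (B + Bᵀ)
  have hSt : Sᵀ = S := by simp [S, add_comm]
  have hSB : trace (S * Bᵀ) = trace (S * B) := by
    rw [← trace_transpose, transpose_mul, hSt, transpose_transpose, trace_mul_comm]
  have hSS : trace (S * S) = trace (S * B) := by
    change trace (S * ((1 / 2 : ℝ) • (B + Bᵀ))) = _
    rw [Matrix.mul_smul, Matrix.mul_add, trace_smul, trace_add, hSB]
    ring
  have hP : projTan U A = A - U * S := by rw [projTan, hBt, Matrix.mul_smul]
  rw [hBt, frobenius_norm_sq_eq_trace, frobenius_norm_sq_eq_trace, frobenius_norm_sq_eq_trace,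
    hP, hSt, transpose_sub, transpose_mul, hSt, Matrix.sub_mul, Matrix.mul_sub, Matrix.mul_sub,
    Matrix.mul_assoc S Uᵀ (U * S), ← Matrix.mul_assoc Uᵀ U S, hU, Matrix.one_mul,
    Matrix.mul_assoc S, ← Matrix.mul_assoc Aᵀ, hBt]
  simp only [trace_sub]
  rw [trace_mul_comm Bᵀ S, hSB, hSS]
  ring

theorem norm_projTan_le {d k : ℕ} {U : Matrix (Fin d) (Fin k) ℝ} (hU : Uᵀ * U = 1)
    (A : Matrix (Fin d) (Fin k) ℝ) : ‖projTan U A‖ ≤ ‖A‖ := by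
  refine le_of_pow_le_pow_left₀ two_ne_zero (norm_nonneg A) ?_
  rw [← norm_sq_projTan_add hU A]
  exact le_add_of_nonneg_right (sq_nonneg _)

theorem projTan_add {d k : ℕ} (U A B : Matrix (Fin d) (Fin k) ℝ) :
    projTan U (A + B) = projTan U A + projTan U B := by
  simp only [projTan, transpose_add, Matrix.mul_add, Matrix.add_mul, smul_add]
  abel

theorem Vmat_add {n d : ℕ} (x y : Fin n → Fin d → ℝ) (π π' : Matrix (Fin n) (Fin n) ℝ) :
    Vmat x y (π + π') = Vmat x y π + Vmat x y π' := by
  ext l l'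
  simp only [Vmat, Matrix.add_apply, add_mul, Finset.sum_add_distrib]

theorem Vmat_eq_sum {n d : ℕ} (x y : Fin n → Fin d → ℝ) (π : Matrix (Fin n) (Fin n) ℝ) :
    Vmat x y π = ∑ i, ∑ j, π i j • vecMulVec (x i - y j) (x i - y j) := by
  ext l l'
  simp [Vmat, Matrix.sum_apply, vecMulVec_apply]

theorem costC_le_CInf {n d : ℕ} (x y : Fin n → Fin d → ℝ) (i j : Fin n) :
    costC x y i j ≤ CInf x y :=
  (le_abs_self _).trans <|
    le_ciSup (f := fun p : Fin n × Fin n => |costC x y p.1 p.2|) (Finite.bddAbove_range _) (i, j)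

theorem CInf_nonneg {n d : ℕ} (x y : Fin n → Fin d → ℝ) : 0 ≤ CInf x y :=
  Real.iSup_nonneg fun _ => abs_nonneg _

theorem norm_Vmat_le {n d : ℕ} (x y : Fin n → Fin d → ℝ) (π : Matrix (Fin n) (Fin n) ℝ) :
    ‖Vmat x y π‖ ≤ CInf x y * l1norm π := by
  rw [Vmat_eq_sum, l1norm, Finset.mul_sum]
  refine (norm_sum_le _ _).trans (Finset.sum_le_sum fun i _ => ?_)
  rw [Finset.mul_sum]
  refine (norm_sum_le _ _).trans (Finset.sum_le_sum fun j _ => ?_)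
  rw [norm_smul, Real.norm_eq_abs, norm_vecMulVec_self, mul_comm]
  exact mul_le_mul_of_nonneg_right (costC_le_CInf x y i j) (abs_nonneg _)

/-- Riemannian gradient of `U ↦ -⟨V_π, U Uᵀ⟩` on the Stiefel manifold. -/
def riemGrad {n d k : ℕ} (x y : Fin n → Fin d → ℝ) (U : Matrix (Fin d) (Fin k) ℝ)
    (π : Matrix (Fin n) (Fin n) ℝ) : Matrix (Fin d) (Fin k) ℝ :=
  projTan U ((-2 : ℝ) • (Vmat x y π * U))

theorem riemGrad_add {n d k : ℕ} (x y : Fin n → Fin d → ℝ) (U : Matrix (Fin d) (Fin k) ℝ)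
    (π π' : Matrix (Fin n) (Fin n) ℝ) :
    riemGrad x y U (π + π') = riemGrad x y U π + riemGrad x y U π' := by
  rw [riemGrad, Vmat_add, Matrix.add_mul, smul_add, projTan_add, riemGrad, riemGrad]

theorem norm_riemGrad_le {n d k : ℕ} (x y : Fin n → Fin d → ℝ)
    {U : Matrix (Fin d) (Fin k) ℝ} (hU : Uᵀ * U = 1) (π : Matrix (Fin n) (Fin n) ℝ) :
    ‖riemGrad x y U π‖ ≤ 2 * CInf x y * l1norm π :=
  calc ‖riemGrad x y U π‖
      ≤ ‖(-2 : ℝ) • (Vmat x y π * U)‖ := norm_projTan_le hU _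
    _ = 2 * ‖Vmat x y π * U‖ := by norm_num [norm_smul]
    _ ≤ 2 * ‖Vmat x y π‖ := by gcongr; exact norm_mul_le_of_transpose_mul_self hU _
    _ ≤ 2 * CInf x y * l1norm π := by
      rw [mul_assoc]; gcongr; exact norm_Vmat_le x y π

theorem frobNorm_riemGrad_le {n d k : ℕ} (x y : Fin n → Fin d → ℝ)
    {U : Matrix (Fin d) (Fin k) ℝ} (hU : Uᵀ * U = 1) (π π' : Matrix (Fin n) (Fin n) ℝ) :
    frobNorm (riemGrad x y U π')
      ≤ frobNorm (riemGrad x y U π) + 2 * CInf x y * l1norm (π' - π) := by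
  rw [frobNorm_eq_norm, frobNorm_eq_norm]
  calc ‖riemGrad x y U π'‖ = ‖riemGrad x y U π + riemGrad x y U (π' - π)‖ := by
        rw [← riemGrad_add, add_sub_cancel]
    _ ≤ ‖riemGrad x y U π‖ + 2 * CInf x y * l1norm (π' - π) :=
        (norm_add_le _ _).trans (by gcongr; exact norm_riemGrad_le x y hU _)

end FrobeniusNorm

theorem statement14_general (n d k : ℕ) (η : ℝ) (κ : Matrix (Fin n) (Fin n) ℝ) (r c : Fin n → ℝ)
    (ε1 ε2 : ℝ)
    (x y : Fin n → Fin d → ℝ) (αt βt : Fin n → ℝ) (Ut : Matrix (Fin d) (Fin k) ℝ)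
    (hU : Utᵀ * Ut = 1)
    (hgrad : frobNorm (projTan Ut
        ((-2 : ℝ) • (Vmat x y (piEta η κ x y αt βt Ut) * Ut))) ≤ ε1) :
    ∀ πh : Matrix (Fin n) (Fin n) ℝ, inPlans r c πh →
      l1norm (πh - piEta η κ x y αt βt Ut) ≤ ε2 →
      frobNorm (projTan Ut ((-2 : ℝ) • (Vmat x y πh * Ut)))
        ≤ ε1 + 2 * CInf x y * ε2 := by
  intro πh _ hπh
  calc frobNorm (projTan Ut ((-2 : ℝ) • (Vmat x y πh * Ut)))
      ≤ frobNorm (projTan Ut ((-2 : ℝ) • (Vmat x y (piEta η κ x y αt βt Ut) * Ut)))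
        + 2 * CInf x y * l1norm (πh - piEta η κ x y αt βt Ut) :=
        frobNorm_riemGrad_le x y hU _ _
    _ ≤ ε1 + 2 * CInf x y * ε2 := by
        have := CInf_nonneg x y
        gcongr

/-- inequality (4.18a) of Theorem 4.8: the Riemannian gradient bound
after rounding. -/
theorem statement14 (n d k : ℕ) (hn : 1 ≤ n) (η : ℝ) (hη : 0 < η)
    (κ : Matrix (Fin n) (Fin n) ℝ) (hκ : ∀ i j, 0 < κ i j)
    (r c : Fin n → ℝ) (hr : inSimplex r) (hc : inSimplex c)
    (ε1 ε2 : ℝ) (hε1 : 0 ≤ ε1) (hε2 : 0 ≤ ε2)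
    (x y : Fin n → Fin d → ℝ) (αt βt : Fin n → ℝ) (Ut : Matrix (Fin d) (Fin k) ℝ)
    (hU : Utᵀ * Ut = 1)
    (hgrad : frobNorm (projTan Ut
        ((-2 : ℝ) • (Vmat x y (piEta η κ x y αt βt Ut) * Ut))) ≤ ε1) :
    ∀ πh : Matrix (Fin n) (Fin n) ℝ, inPlans r c πh →
      l1norm (πh - piEta η κ x y αt βt Ut) ≤ ε2 →
      frobNorm (projTan Ut ((-2 : ℝ) • (Vmat x y πh * Ut)))
        ≤ ε1 + 2 * CInf x y * ε2 :=
  statement14_general n d k η κ r c ε1 ε2 x y αt βt Ut hU hgrad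

end PRWPaper
end
end
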